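/- For every n ≥ 1 there exists a constant C ≥ 1 such that for every (a₁, …, aₙ) in the connectivity locus 𝒞ₙ, the filled-in Julia set K = K(P_{aₙ} ∘ ⋯ ∘ P_{a₁}) satisfies 1/C ≤ diam K ≤ C, where diam denotes the Euclidean diameter. -/

import Mathlib

/-- The map `P_{aₙ} ∘ ⋯ ∘ P_{a₁} : ℂ → ℂ`, where `P_a(z) = z² + a`.
Here `a i` plays the role of `a_{i+1}`, i.e. `P_{a₁}` is applied first. -/
def compQuadFun : (n : ℕ) → (Fin n → ℂ) → ℂ → ℂ
  | 0, _ => id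
  | n + 1, a => (fun z => z ^ 2 + a (Fin.last n)) ∘ compQuadFun n (a ∘ Fin.castSucc)

/-- The filled-in Julia set of `F : ℂ → ℂ`: points with bounded forward orbit. -/
def filledJulia (F : ℂ → ℂ) : Set ℂ := {z : ℂ | ∃ B : ℝ, ∀ k : ℕ, ‖F^[k] z‖ ≤ B}

/-- Orbit of `z` under the sequence of quadratic maps `w ↦ w² + c k`. -/
def qOrb (c : ℕ → ℂ) (z : ℂ) : ℕ → ℂ
  | 0 => z
  | k + 1 => (qOrb c z k) ^ 2 + c k

@[simp] lemma qOrb_zero (c : ℕ → ℂ) (z : ℂ) : qOrb c z 0 = z := rfl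
lemma qOrb_succ (c : ℕ → ℂ) (z : ℂ) (k : ℕ) :
    qOrb c z (k + 1) = (qOrb c z k) ^ 2 + c k := rfl
lemma qOrb_one (c : ℕ → ℂ) (z : ℂ) : qOrb c z 1 = z ^ 2 + c 0 := rfl

/-- Points with bounded orbit. -/
def qJ (c : ℕ → ℂ) : Set ℂ := {z | ∃ B : ℝ, ∀ k : ℕ, ‖qOrb c z k‖ ≤ B}

lemma qOrb_add (c : ℕ → ℂ) (z : ℂ) (m k : ℕ) :
    qOrb c z (m + k) = qOrb (fun j => c (m + j)) (qOrb c z m) k := by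
  induction k with
  | zero => rfl
  | succ k ih => rw [← Nat.add_assoc, qOrb_succ, ih, qOrb_succ]

lemma qOrb_shift (c : ℕ → ℂ) (z : ℂ) (k : ℕ) :
    qOrb c z (1 + k) = qOrb (fun j => c (1 + j)) (z ^ 2 + c 0) k := by
  rw [qOrb_add, qOrb_one]

lemma qOrb_congr {c c' : ℕ → ℂ} (z : ℂ) (k : ℕ) (h : ∀ j < k, c j = c' j) :
    qOrb c z k = qOrb c' z k := by
  induction k with
  | zero => rfl
  | succ k ih =>
    rw [qOrb_succ, qOrb_succ, ih (fun j hj => h j (Nat.lt_succ_of_lt hj)),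
      h k (Nat.lt_succ_self k)]

lemma qOrb_continuous (c : ℕ → ℂ) (i : ℕ) : Continuous fun z => qOrb c z i := by
  induction i with
  | zero => exact continuous_id
  | succ i ih =>
    exact (ih.pow 2).add continuous_const

lemma qOrb_surj (c : ℕ → ℂ) (i : ℕ) : Function.Surjective fun z => qOrb c z i := by
  induction i with
  | zero => exact fun w => ⟨w, rfl⟩
  | succ i ih =>
    intro w
    obtain ⟨u, hu⟩ := IsAlgClosed.exists_pow_nat_eq (k := ℂ) (w - c i) (n := 2) (by norm_num)
    obtain ⟨z, hz⟩ := ih u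
    refine ⟨z, ?_⟩
    show qOrb c z (i + 1) = w
    rw [qOrb_succ, show qOrb c z i = u from hz, hu]
    ring

lemma qOrb_neg (c : ℕ → ℂ) (z : ℂ) (k : ℕ) : qOrb c (-z) (k + 1) = qOrb c z (k + 1) := by
  induction k with
  | zero => simp [qOrb_succ]
  | succ k ih => rw [qOrb_succ c (-z) (k + 1), ih]; rfl

lemma qJ_neg_mem {c : ℕ → ℂ} {z : ℂ} (hz : z ∈ qJ c) : -z ∈ qJ c := by
  obtain ⟨B, hB⟩ := hz
  refine ⟨B, fun k => ?_⟩
  cases k with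
  | zero => simpa using hB 0
  | succ k => rw [qOrb_neg]; exact hB (k + 1)

lemma qJ_step {c : ℕ → ℂ} {z : ℂ} (hz : z ∈ qJ c) :
    z ^ 2 + c 0 ∈ qJ (fun j => c (1 + j)) := by
  obtain ⟨B, hB⟩ := hz
  exact ⟨B, fun k => by rw [← qOrb_shift]; exact hB (1 + k)⟩

lemma qJ_unstep {c : ℕ → ℂ} {w u : ℂ} (hw : w ∈ qJ (fun j => c (1 + j)))
    (hu : u ^ 2 + c 0 = w) : u ∈ qJ c := by
  obtain ⟨B, hB⟩ := hw
  refine ⟨max B ‖u‖, fun k => ?_⟩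
  cases k with
  | zero => simp
  | succ k =>
    have h1 : qOrb c u (1 + k) = qOrb (fun j => c (1 + j)) w k := by
      rw [qOrb_shift, hu]
    rw [Nat.add_comm k 1, h1]
    exact le_max_of_le_left (hB k)
lemma qJ_image (c : ℕ → ℂ) (i : ℕ) :
    qJ (fun j => c (i + j)) = (fun z => qOrb c z i) '' qJ c := by
  ext w
  constructor
  · rintro ⟨B, hB⟩
    obtain ⟨z, hz⟩ := qOrb_surj c i w
    simp only at hz
    refine ⟨z, ⟨max B (∑ m ∈ Finset.range i, ‖qOrb c z m‖), fun k => ?_⟩, hz⟩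
    rcases le_or_gt i k with h | h
    · have : qOrb c z k = qOrb (fun j => c (i + j)) w (k - i) := by
        rw [← hz, ← qOrb_add, Nat.add_sub_cancel' h]
      rw [this]
      exact le_max_of_le_left (hB _)
    · refine le_max_of_le_right ?_
      exact Finset.single_le_sum (f := fun m => ‖qOrb c z m‖)
        (fun m _ => norm_nonneg _) (Finset.mem_range.mpr h)
  · rintro ⟨z, ⟨B, hB⟩, hz⟩
    refine ⟨B, fun k => ?_⟩
    simp only at hz
    rw [← hz, ← qOrb_add]
    exact hB _

lemma qOrb_escape {c : ℕ → ℂ} {M : ℝ} (hM : ∀ k, ‖c k‖ ≤ M) {z : ℂ}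
    (hz : max M 2 < ‖z‖) (k : ℕ) : ‖z‖ * (‖z‖ - 1) ^ k ≤ ‖qOrb c z k‖ := by
  have h2 : 2 < ‖z‖ := lt_of_le_of_lt (le_max_right M 2) hz
  have hMz : M < ‖z‖ := lt_of_le_of_lt (le_max_left M 2) hz
  induction k with
  | zero => simp
  | succ k ih =>
    have hp : 1 ≤ (‖z‖ - 1) ^ k := one_le_pow₀ (by linarith)
    have huz : ‖z‖ ≤ ‖qOrb c z k‖ := le_trans (by nlinarith) ih
    have h3 : ‖qOrb c z k ^ 2‖ ≤ ‖qOrb c z k ^ 2 + c k‖ + ‖c k‖ := by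
      calc ‖qOrb c z k ^ 2‖ = ‖(qOrb c z k ^ 2 + c k) - c k‖ := by congr 1; ring
      _ ≤ _ := norm_sub_le _ _
    have h4 : ‖qOrb c z k ^ 2‖ = ‖qOrb c z k‖ ^ 2 := norm_pow _ 2
    rw [qOrb_succ, pow_succ]
    nlinarith [hM k, norm_nonneg (qOrb c z k ^ 2 + c k)]

lemma qJ_norm_le {c : ℕ → ℂ} {M : ℝ} (hM : ∀ k, ‖c k‖ ≤ M) {z : ℂ}
    (hz : z ∈ qJ c) : ‖z‖ ≤ max M 2 := by
  by_contra h
  push_neg at h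
  obtain ⟨B, hB⟩ := hz
  have h2 : 2 < ‖z‖ := lt_of_le_of_lt (le_max_right M 2) h
  have h1 : 1 < ‖z‖ - 1 := by linarith
  obtain ⟨k, hk⟩ := pow_unbounded_of_one_lt B h1
  have := qOrb_escape hM h k
  have := hB k
  nlinarith [pow_pos (by linarith : (0:ℝ) < ‖z‖ - 1) k]
def qBnd (M B : ℝ) : ℕ → ℝ
  | 0 => B
  | j + 1 => (qBnd M B j) ^ 2 + M

lemma qBnd_one_le {M B : ℝ} (hB : 1 ≤ B) (hM : 0 ≤ M) : ∀ j, 1 ≤ qBnd M B j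
  | 0 => hB
  | j + 1 => by have := qBnd_one_le hB hM j; show 1 ≤ (qBnd M B j) ^ 2 + M; nlinarith

lemma qBnd_mono {M B : ℝ} (hB : 1 ≤ B) (hM : 0 ≤ M) : Monotone (qBnd M B) :=
  monotone_nat_of_le_succ fun j => by
    have := qBnd_one_le hB hM j
    show qBnd M B j ≤ (qBnd M B j) ^ 2 + M
    nlinarith

lemma compQuad_eq : ∀ (n : ℕ) (a : Fin n → ℂ) (c : ℕ → ℂ),
    (∀ j : Fin n, c j.val = a j) → ∀ z, compQuadFun n a z = qOrb c z n
  | 0, _, _, _, _ => rfl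
  | n + 1, a, c, hc, z => by
    show (compQuadFun n (a ∘ Fin.castSucc) z) ^ 2 + a (Fin.last n) = qOrb c z (n + 1)
    rw [compQuad_eq n (a ∘ Fin.castSucc) c
        (fun j => by simpa using hc (Fin.castSucc j)) z, qOrb_succ,
      ← hc (Fin.last n)]
    rfl

lemma iterate_eq {n : ℕ} (hn : 0 < n) (a : Fin n → ℂ) (z : ℂ) (k : ℕ) :
    (compQuadFun n a)^[k] z = qOrb (fun m => a ⟨m % n, Nat.mod_lt m hn⟩) z (n * k) := by
  set c : ℕ → ℂ := fun m => a ⟨m % n, Nat.mod_lt m hn⟩ with hcdef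
  induction k with
  | zero => rfl
  | succ k ih =>
    rw [Function.iterate_succ_apply', ih]
    have hc' : ∀ j : Fin n, c (n * k + j.val) = a j := by
      intro j
      show a _ = a j
      congr 1
      exact Fin.ext (by simp [Nat.mul_add_mod, Nat.mod_eq_of_lt j.isLt])
    rw [compQuad_eq n a (fun j => c (n * k + j)) hc', ← qOrb_add,
      show n * k + n = n * (k + 1) by ring]

lemma filledJulia_eq {n : ℕ} (hn : 0 < n) (a : Fin n → ℂ) :
    filledJulia (compQuadFun n a) = qJ (fun m => a ⟨m % n, Nat.mod_lt m hn⟩) := by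
  set c : ℕ → ℂ := fun m => a ⟨m % n, Nat.mod_lt m hn⟩ with hcdef
  set M : ℝ := ∑ j : Fin n, ‖a j‖ with hMdef
  have hM : ∀ m, ‖c m‖ ≤ M :=
    fun m => Finset.single_le_sum (f := fun j : Fin n => ‖a j‖)
      (fun j _ => norm_nonneg _) (Finset.mem_univ _)
  have hM0 : 0 ≤ M := Finset.sum_nonneg fun j _ => norm_nonneg _
  ext z
  constructor
  · rintro ⟨B, hB⟩
    have hB1 : 1 ≤ max B 1 := le_max_right _ _
    refine ⟨qBnd M (max B 1) n, fun k => ?_⟩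
    have key : ∀ q j, ‖qOrb c z (n * q + j)‖ ≤ qBnd M (max B 1) j := by
      intro q j
      induction j with
      | zero =>
        rw [Nat.add_zero]
        have := hB q
        rw [iterate_eq hn a z q] at this
        exact le_trans this (le_max_left _ _)
      | succ j ih =>
        rw [← Nat.add_assoc, qOrb_succ]
        show _ ≤ (qBnd M (max B 1) j) ^ 2 + M
        calc ‖qOrb c z (n * q + j) ^ 2 + c (n * q + j)‖
            ≤ ‖qOrb c z (n * q + j) ^ 2‖ + ‖c (n * q + j)‖ := norm_add_le _ _
          _ = ‖qOrb c z (n * q + j)‖ ^ 2 + ‖c (n * q + j)‖ := by rw [norm_pow]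
          _ ≤ (qBnd M (max B 1) j) ^ 2 + M := by
              gcongr <;> first | exact norm_nonneg _ | exact hM _ | exact ih
    have hk := key (k / n) (k % n)
    rw [Nat.div_add_mod] at hk
    exact le_trans hk (qBnd_mono hB1 hM0 (le_of_lt (Nat.mod_lt k hn)))
  · rintro ⟨B, hB⟩
    exact ⟨B, fun k => by rw [iterate_eq hn a z k]; exact hB _⟩

lemma qJ_step' (c : ℕ → ℂ) (i : ℕ) {z : ℂ} (hz : z ∈ qJ (fun j => c (i + j))) :
    z ^ 2 + c i ∈ qJ (fun j => c (i + 1 + j)) := by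
  obtain ⟨B, hB⟩ := hz
  refine ⟨B, fun k => ?_⟩
  have h1 : qOrb (fun j => c (i + j)) z (1 + k) = qOrb (fun j => c (i + 1 + j)) (z ^ 2 + c i) k := by
    rw [qOrb_shift]
    have e1 : c (i + 0) = c i := by norm_num
    rw [e1]
    exact qOrb_congr _ _ (fun j _ => by show c (i + (1 + j)) = c (i + 1 + j); congr 1; omega)
  rw [← h1]
  exact hB _

lemma qJ_unstep' (c : ℕ → ℂ) (i : ℕ) {w u : ℂ} (hw : w ∈ qJ (fun j => c (i + 1 + j)))
    (hu : u ^ 2 + c i = w) : u ∈ qJ (fun j => c (i + j)) := by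
  have he : (fun j => c (i + 1 + j)) = (fun j => (fun j' => c (i + j')) (1 + j)) := by
    funext j; congr 1; omega
  rw [he] at hw
  exact qJ_unstep (c := fun j => c (i + j)) hw (by simpa using hu)

lemma qJ_sq_add_le {c : ℕ → ℂ} {M : ℝ} (hM : ∀ k, ‖c k‖ ≤ M) (i : ℕ) {z : ℂ}
    (hz : z ∈ qJ (fun j => c (i + j))) : ‖z ^ 2 + c i‖ ≤ max M 2 :=
  qJ_norm_le (c := fun j => c (i + 1 + j)) (fun k => hM _) (qJ_step' c i hz)

lemma disconnected_aux {c : ℕ → ℂ} {M : ℝ} (hM : ∀ k, ‖c k‖ ≤ M) (i : ℕ)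
    (hMi : ‖c i‖ = M) (hM2 : 2 < M)
    (hO : IsConnected (qJ (fun j => c (i + j)))) : False := by
  set O := qJ (fun j => c (i + j)) with hOdef
  have hmax : max M 2 = M := max_eq_left (by linarith)
  have h0 : (0 : ℂ) ∉ O := by
    intro h0
    have h1 := qJ_step' c i h0
    have h2 := qJ_sq_add_le hM (i + 1) h1
    rw [hmax] at h2
    have h3 : ‖((0:ℂ)^2 + c i)^2‖ ≤ ‖((0:ℂ)^2 + c i)^2 + c (i+1)‖ + ‖c (i+1)‖ := by
      calc ‖((0:ℂ)^2 + c i)^2‖ = ‖(((0:ℂ)^2 + c i)^2 + c (i+1)) - c (i+1)‖ := by congr 1; ring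
      _ ≤ _ := norm_sub_le _ _
    have h4 : ‖((0:ℂ)^2 + c i)^2‖ = M^2 := by rw [norm_pow]; simp [hMi]
    have h5 := hM (i+1)
    nlinarith
  obtain ⟨β, hβ⟩ := IsAlgClosed.exists_pow_nat_eq (k := ℂ) ((starRingEnd ℂ) (c i)) (n := 2)
    (by norm_num)
  have him : ∀ z ∈ O, (β * z).im ≠ 0 := by
    intro z hz
    have hz0 : z ≠ 0 := fun h => h0 (h ▸ hz)
    have h2 := qJ_sq_add_le hM i hz
    rw [hmax, ← hMi] at h2
    have h3 : Complex.normSq (z^2 + c i) ≤ Complex.normSq (c i) := by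
      rw [Complex.normSq_eq_norm_sq, Complex.normSq_eq_norm_sq]
      exact pow_le_pow_left₀ (norm_nonneg _) h2 2
    rw [Complex.normSq_add] at h3
    have h4 : 0 < Complex.normSq (z^2) := Complex.normSq_pos.mpr (pow_ne_zero 2 hz0)
    have h5 : (z^2 * (starRingEnd ℂ) (c i)).re < 0 := by nlinarith
    intro him0
    have h6 : ((β*z)^2).re = (β*z).re^2 - (β*z).im^2 := by
      rw [sq (β*z), Complex.mul_re]; ring
    have h7 : ((β*z)^2).re = (z^2 * (starRingEnd ℂ) (c i)).re := by
      congr 1; rw [mul_pow, hβ]; ring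
    rw [him0] at h6
    nlinarith [sq_nonneg ((β*z).re)]
  obtain ⟨z0, hz0⟩ := hO.nonempty
  have hz0' : -z0 ∈ O := qJ_neg_mem hz0
  have hu : IsOpen {z : ℂ | 0 < (β * z).im} :=
    isOpen_lt continuous_const (Complex.continuous_im.comp (continuous_const.mul continuous_id))
  have hv : IsOpen {z : ℂ | (β * z).im < 0} :=
    isOpen_lt (Complex.continuous_im.comp (continuous_const.mul continuous_id)) continuous_const
  have hcover : O ⊆ {z | 0 < (β * z).im} ∪ {z | (β * z).im < 0} := by
    intro z hz
    rcases lt_or_gt_of_ne (him z hz) with h | h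
    · exact Or.inr h
    · exact Or.inl h
  have hneg : ∀ z : ℂ, (β * -z).im = -(β * z).im := by
    intro z; rw [mul_neg, Complex.neg_im]
  have hne1 : (O ∩ {z | 0 < (β * z).im}).Nonempty := by
    rcases lt_or_gt_of_ne (him z0 hz0) with h | h
    · exact ⟨-z0, hz0', by simp only [Set.mem_setOf_eq, hneg]; linarith⟩
    · exact ⟨z0, hz0, h⟩
  have hne2 : (O ∩ {z | (β * z).im < 0}).Nonempty := by
    rcases lt_or_gt_of_ne (him z0 hz0) with h | h
    · exact ⟨z0, hz0, h⟩
    · exact ⟨-z0, hz0', by simp only [Set.mem_setOf_eq, hneg]; linarith⟩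
  obtain ⟨w, -, hw1, hw2⟩ := hO.isPreconnected _ _ hu hv hcover hne1 hne2
  simp only [Set.mem_setOf_eq] at hw1 hw2
  linarith

/-- On the connectivity locus, the diameter of the filled-in Julia set is uniformly
commensurable with `1`. -/
theorem filledJulia_diam_commensurable (n : ℕ) (hn : 1 ≤ n) :
    ∃ C : ℝ, 1 ≤ C ∧ ∀ a : Fin n → ℂ,
      IsConnected (filledJulia (compQuadFun n a)) →
        1 / C ≤ Metric.diam (filledJulia (compQuadFun n a)) ∧
        Metric.diam (filledJulia (compQuadFun n a)) ≤ C := by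
  refine ⟨4, by norm_num, fun a hK => ?_⟩
  have hn0 : 0 < n := hn
  rw [filledJulia_eq hn0 a] at hK ⊢
  set c : ℕ → ℂ := fun m => a ⟨m % n, Nat.mod_lt m hn0⟩ with hcdef
  have hc0 : (fun j => c (0 + j)) = c := funext fun j => by rw [Nat.zero_add]
  have hconn : ∀ i, IsConnected (qJ (fun j => c (i + j))) := by
    intro i
    rw [qJ_image]
    exact hK.image _ (qOrb_continuous c i).continuousOn
  have hca : ∀ j : Fin n, c j.val = a j := by
    intro j
    show a _ = a j
    congr 1
    exact Fin.ext (Nat.mod_eq_of_lt j.isLt)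
  have ha2 : ∀ j : Fin n, ‖a j‖ ≤ 2 := by
    by_contra h
    push_neg at h
    obtain ⟨j0, hj0⟩ := h
    obtain ⟨i0, -, hmax⟩ := Finset.exists_max_image Finset.univ (fun i => ‖a i‖)
      ⟨j0, Finset.mem_univ _⟩
    have hM : ∀ k, ‖c k‖ ≤ ‖a i0‖ := fun k => hmax _ (Finset.mem_univ _)
    exact disconnected_aux hM i0.val (by rw [hca i0])
      (lt_of_lt_of_le hj0 (hmax j0 (Finset.mem_univ _))) (hconn i0.val)
  have hMc : ∀ k, ‖c k‖ ≤ 2 := fun k => ha2 ⟨k % n, Nat.mod_lt k hn0⟩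
  have hub : ∀ z ∈ qJ c, ‖z‖ ≤ 2 := fun z hz => by
    have := qJ_norm_le hMc hz
    rwa [max_self] at this
  have hbd : Bornology.IsBounded (qJ c) :=
    (Metric.isBounded_closedBall (x := (0:ℂ)) (r := 2)).subset
      (fun z hz => mem_closedBall_zero_iff.mpr (hub z hz))
  have hnorm2 : ‖(2:ℂ)‖ = 2 := by simp
  constructor
  · by_contra hd
    push_neg at hd
    have hK4 : ∀ i, ∀ z ∈ qJ (fun j => c (i + j)), ‖z‖ ≤ 1/4 := by
      intro i
      induction i with
      | zero =>
        intro z hz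
        rw [hc0] at hz
        have h1 := Metric.dist_le_diam_of_mem hbd hz (qJ_neg_mem hz)
        have h2 : dist z (-z) = 2 * ‖z‖ := by
          rw [dist_eq_norm, sub_neg_eq_add, ← two_mul, norm_mul, hnorm2]
        rw [h2] at h1
        linarith
      | succ i ih =>
        intro w hw
        obtain ⟨u, hu⟩ := IsAlgClosed.exists_pow_nat_eq (k := ℂ) (w - c i) (n := 2)
          (by norm_num)
        have hu' : u ∈ qJ (fun j => c (i + j)) := qJ_unstep' c i hw (by rw [hu]; ring)
        have h1 : ‖w - c i‖ ≤ 1/16 := by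
          rw [← hu, norm_pow]
          have := ih u hu'
          nlinarith [norm_nonneg u]
        have hw2 : -w ∈ qJ (fun j => c (i + 1 + j)) := qJ_neg_mem hw
        obtain ⟨u2, hu2⟩ := IsAlgClosed.exists_pow_nat_eq (k := ℂ) (-w - c i) (n := 2)
          (by norm_num)
        have hu2' : u2 ∈ qJ (fun j => c (i + j)) := qJ_unstep' c i hw2 (by rw [hu2]; ring)
        have h2 : ‖-w - c i‖ ≤ 1/16 := by
          rw [← hu2, norm_pow]
          have := ih u2 hu2'
          nlinarith [norm_nonneg u2]
        have h4 : ‖(w - c i) - (-w - c i)‖ ≤ ‖w - c i‖ + ‖-w - c i‖ := norm_sub_le _ _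
        have h5 : (w - c i) - (-w - c i) = 2*w := by ring
        rw [h5, norm_mul, hnorm2] at h4
        linarith
    have hc4 : ∀ i, ‖c i‖ ≤ 1/4 := by
      intro i
      obtain ⟨w, hw⟩ := (hconn (i+1)).nonempty
      obtain ⟨u, hu⟩ := IsAlgClosed.exists_pow_nat_eq (k := ℂ) (w - c i) (n := 2) (by norm_num)
      have hu' : u ∈ qJ (fun j => c (i + j)) := qJ_unstep' c i hw (by rw [hu]; ring)
      have h1 : ‖w - c i‖ ≤ 1/16 := by
        rw [← hu, norm_pow]
        have := hK4 i u hu'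
        nlinarith [norm_nonneg u]
      have hw2 : -w ∈ qJ (fun j => c (i + 1 + j)) := qJ_neg_mem hw
      obtain ⟨u2, hu2⟩ := IsAlgClosed.exists_pow_nat_eq (k := ℂ) (-w - c i) (n := 2)
        (by norm_num)
      have hu2' : u2 ∈ qJ (fun j => c (i + j)) := qJ_unstep' c i hw2 (by rw [hu2]; ring)
      have h2 : ‖-w - c i‖ ≤ 1/16 := by
        rw [← hu2, norm_pow]
        have := hK4 i u2 hu2'
        nlinarith [norm_nonneg u2]
      have h4 : ‖(w - c i) + (-w - c i)‖ ≤ ‖w - c i‖ + ‖-w - c i‖ := norm_add_le _ _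
      have h5 : (w - c i) + (-w - c i) = 2 * (-(c i)) := by ring
      rw [h5, norm_mul, hnorm2, norm_neg] at h4
      linarith
    have hball : ∀ z : ℂ, ‖z‖ ≤ 1/2 → z ∈ qJ c := by
      intro z hz
      refine ⟨1/2, fun k => ?_⟩
      induction k with
      | zero => simpa using hz
      | succ k ih =>
        rw [qOrb_succ]
        calc ‖qOrb c z k ^ 2 + c k‖ ≤ ‖qOrb c z k‖^2 + ‖c k‖ := by
              refine le_trans (norm_add_le _ _) ?_
              rw [norm_pow]
        _ ≤ 1/2 := by
              have := hc4 k
              nlinarith [norm_nonneg (qOrb c z k)]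
    have hhalf : (1/2 : ℂ) ∈ qJ c := hball _ (by norm_num)
    have h0m : (0:ℂ) ∈ qJ c := hball _ (by norm_num)
    have hdl := Metric.dist_le_diam_of_mem hbd hhalf h0m
    have : dist (1/2 : ℂ) 0 = 1/2 := by
      rw [dist_zero_right]
      norm_num
    linarith
  · refine Metric.diam_le_of_forall_dist_le (by norm_num) (fun x hx y hy => ?_)
    calc dist x y = ‖x - y‖ := dist_eq_norm x y
    _ ≤ ‖x‖ + ‖y‖ := norm_sub_le x y
    _ ≤ 4 := by have := hub x hx; have := hub y hy; linarith
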